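/- In the free group F_k (k ≥ 2), with χ_n = ∑_{|x|=n} x in ℂ[F_k], one has χ_n = p_n(χ_1) for all n ≥ 0, where p_n is defined by p_0 = 1, p_1 = z, p_2 = z² − 2k, p_{n+1} = z·p_n − (2k−1)·p_{n−1} (n ≥ 2), evaluated in the commutative subring generated by χ_0 and χ_1. -/

import Mathlib

/-- The sphere of radius `n` about the identity in the free group `F_k`:
the finite set of elements of reduced word length `n`. -/
noncomputable def sphere (k n : ℕ) : Finset (FreeGroup (Fin k)) :=
  (Set.Finite.preimage (Function.Injective.injOn FreeGroup.toWord_injective)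
    (List.finite_length_eq ((Fin k) × Bool) n)).toFinset

/-- `χ_n = ∑_{|x| = n} x`, the sum of the sphere of radius `n` in `ℂ[F_k]`. -/
noncomputable def chi (k n : ℕ) : MonoidAlgebra ℂ (FreeGroup (Fin k)) :=
  ∑ x ∈ sphere k n, MonoidAlgebra.of ℂ (FreeGroup (Fin k)) x

/-- The polynomials `p_0 = 1`, `p_1 = z`, `p_2 = z² - 2k`,
`p_{n+1} = z p_n - (2k-1) p_{n-1}` for `n ≥ 2`. -/
noncomputable def p (k : ℕ) : ℕ → Polynomial ℂ
  | 0 => 1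
  | 1 => Polynomial.X
  | 2 => Polynomial.X ^ 2 - Polynomial.C ((2 * k : ℕ) : ℂ)
  | (n + 3) => Polynomial.X * p k (n + 2) - Polynomial.C ((2 * k - 1 : ℕ) : ℂ) * p k (n + 1)

/-- `e_0 = 1` and `e_n = 2k(2k-1)^{n-1}` for `n ≥ 1`, the cardinality of the sphere. -/
def eN (k n : ℕ) : ℕ := if n = 0 then 1 else 2 * k * (2 * k - 1) ^ (n - 1)

/-! Left multiplication of a reduced word `w` of length `m + 1` by a letter `c` either gives the
reduced word `c :: w`, or, when `c` is inverse to the first letter of `w`, cancels it. Every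
reduced word of length `m + 2` arises exactly once in the first way, and every reduced word `T`
of length `m` arises in the second way once for each letter that may precede `T`: `2k` of them
if `T` is empty and `2k - 1` otherwise. Hence `χ₁ χ₁ = χ₂ + 2k` and
`χ₁ χ_{m+2} = χ_{m+3} + (2k - 1) χ_{m+1}`, which is the recurrence defining `p`. -/

open FreeGroup hiding map_one map_mul
open Finset hiding mk

namespace FreeGroup

variable {α : Type*}

theorem finite_setOf_isReduced_length [Finite α] (n : ℕ) :
    {L : List (α × Bool) | L.length = n ∧ IsReduced L}.Finite :=
  (List.finite_length_eq (α × Bool) n).subset fun _ hL => hL.1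

noncomputable def reducedWords [Finite α] (n : ℕ) : Finset (List (α × Bool)) :=
  (finite_setOf_isReduced_length n).toFinset

theorem mem_reducedWords [Finite α] {n : ℕ} {L : List (α × Bool)} :
    L ∈ reducedWords n ↔ L.length = n ∧ IsReduced L :=
  Set.Finite.mem_toFinset _

theorem reducedWords_zero [Finite α] : reducedWords (α := α) 0 = {[]} := by
  ext L
  simp +contextual [mem_reducedWords, List.length_eq_zero_iff]

theorem isReduced_cons_iff {c : α × Bool} {T : List (α × Bool)} :
    IsReduced (c :: T) ↔ IsReduced T ∧ ∀ d ∈ T.head?, c.1 = d.1 → c.2 = d.2 := by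
  cases T <;> simp [and_comm]

theorem mk_cons_inv_cons (d : α × Bool) (T : List (α × Bool)) :
    mk ((d.1, !d.2) :: d :: T) = mk T :=
  Quot.sound Red.Step.cons_not_rev

variable [Fintype α] [DecidableEq α]

def extensions (T : List (α × Bool)) : Finset (α × Bool) :=
  {c | ∀ d ∈ T.head?, c.1 = d.1 → c.2 = d.2}

theorem mem_extensions {T : List (α × Bool)} {c : α × Bool} (hT : IsReduced T) :
    c ∈ extensions T ↔ IsReduced (c :: T) := by
  simp [extensions, isReduced_cons_iff, hT]

theorem extensions_nil : extensions ([] : List (α × Bool)) = univ := by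
  simp [extensions]

theorem extensions_cons (d : α × Bool) (T : List (α × Bool)) :
    extensions (d :: T) = univ.erase (d.1, !d.2) := by
  ext c
  obtain ⟨a, b⟩ := c
  obtain ⟨a', b'⟩ := d
  simp only [extensions, mem_filter, mem_univ, true_and, List.head?_cons, Option.mem_def,
    Option.some.injEq, forall_eq', mem_erase, ne_eq, Prod.mk.injEq]
  cases b <;> cases b' <;> simp

theorem compl_extensions_cons (d : α × Bool) (T : List (α × Bool)) :
    (extensions (d :: T))ᶜ = {(d.1, !d.2)} := by
  rw [extensions_cons, ← compl_singleton, compl_compl]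

theorem card_extensions_nil : #(extensions ([] : List (α × Bool))) = 2 * Fintype.card α := by
  simp [extensions_nil, mul_comm]

theorem card_extensions_cons (d : α × Bool) (T : List (α × Bool)) :
    #(extensions (d :: T)) = 2 * Fintype.card α - 1 := by
  simp [extensions_cons, mul_comm]

theorem sum_reducedWords_succ {M : Type*} [AddCommMonoid M] (n : ℕ)
    (f : List (α × Bool) → M) :
    ∑ L ∈ reducedWords (n + 1), f L = ∑ T ∈ reducedWords n, ∑ c ∈ extensions T, f (c :: T) := by
  rw [sum_sigma']
  refine (sum_bij (fun p _ => p.2 :: p.1) ?_ ?_ ?_ fun _ _ => rfl).symm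
  · rintro ⟨T, c⟩ h
    simp only [mem_sigma, mem_reducedWords] at h ⊢
    exact ⟨by rw [List.length_cons, h.1.1], (mem_extensions h.1.2).1 h.2⟩
  · rintro ⟨T, c⟩ - ⟨T', c'⟩ - h
    simp_all
  · rintro (_ | ⟨c, T⟩) hL
    · simp [mem_reducedWords] at hL
    · obtain ⟨hlen, hred⟩ := mem_reducedWords.1 hL
      have hT := (isReduced_cons_iff.1 hred).1
      exact ⟨⟨T, c⟩, mem_sigma.2 ⟨mem_reducedWords.2 ⟨by simpa using hlen, hT⟩,
        (mem_extensions hT).2 hred⟩, rfl⟩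

end FreeGroup

theorem mem_sphere {k n : ℕ} {x : FreeGroup (Fin k)} : x ∈ sphere k n ↔ x.toWord.length = n :=
  Set.Finite.mem_toFinset _

theorem chi_eq_sum_reducedWords (k n : ℕ) :
    chi k n = ∑ L ∈ reducedWords n, MonoidAlgebra.of ℂ (FreeGroup (Fin k)) (mk L) := by
  refine sum_nbij' toWord mk (fun x hx => ?_) (fun L hL => ?_) (fun x _ => mk_toWord)
    (fun L hL => ?_) (fun x _ => by rw [mk_toWord])
  · exact mem_reducedWords.2 ⟨mem_sphere.1 hx, isReduced_toWord⟩
  · obtain ⟨hlen, hred⟩ := mem_reducedWords.1 hL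
    rwa [mem_sphere, toWord_mk, hred.reduce_eq]
  · rw [toWord_mk, (mem_reducedWords.1 hL).2.reduce_eq]

theorem chi_one_eq_sum (k : ℕ) :
    chi k 1 = ∑ c, MonoidAlgebra.of ℂ (FreeGroup (Fin k)) (mk [c]) := by
  rw [chi_eq_sum_reducedWords, sum_reducedWords_succ, reducedWords_zero, sum_singleton,
    extensions_nil]

theorem chi_one_mul_chi_succ (k m : ℕ) :
    chi k 1 * chi k (m + 1) = chi k (m + 2) +
      ∑ T ∈ reducedWords m, #(extensions T) • MonoidAlgebra.of ℂ (FreeGroup (Fin k)) (mk T) := by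
  have of_mul_of (c : Fin k × Bool) (L : List (Fin k × Bool)) :
      MonoidAlgebra.of ℂ (FreeGroup (Fin k)) (mk [c]) * MonoidAlgebra.of ℂ _ (mk L) =
        MonoidAlgebra.of ℂ _ (mk (c :: L)) := by
    rw [← map_mul, mul_mk, List.singleton_append]
  calc chi k 1 * chi k (m + 1)
      = ∑ L ∈ reducedWords (m + 1), ∑ c, MonoidAlgebra.of ℂ _ (mk (c :: L)) := by
        rw [chi_one_eq_sum, chi_eq_sum_reducedWords, sum_mul_sum, sum_comm]
        simp only [of_mul_of]
    _ = ∑ L ∈ reducedWords (m + 1), (∑ c ∈ extensions L, MonoidAlgebra.of ℂ _ (mk (c :: L)) +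
          MonoidAlgebra.of ℂ _ (mk L.tail)) := by
        refine sum_congr rfl fun L hL => ?_
        rw [← sum_add_sum_compl (extensions L)]
        obtain _ | ⟨d, T⟩ := L
        · simp [mem_reducedWords] at hL
        · rw [compl_extensions_cons, sum_singleton, mk_cons_inv_cons, List.tail_cons]
    _ = _ := by
        rw [sum_add_distrib, chi_eq_sum_reducedWords, sum_reducedWords_succ (m + 1)]
        congr 1
        rw [sum_reducedWords_succ]
        simp only [List.tail_cons, sum_const]

theorem chi_zero (k : ℕ) : chi k 0 = 1 := by
  rw [chi_eq_sum_reducedWords, reducedWords_zero, sum_singleton, ← one_eq_mk, map_one]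

theorem chi_one_mul_chi_one (k : ℕ) : chi k 1 * chi k 1 = chi k 2 + (2 * k) • 1 := by
  rw [chi_one_mul_chi_succ, reducedWords_zero, sum_singleton, card_extensions_nil,
    Fintype.card_fin, ← one_eq_mk, map_one]

theorem chi_one_mul_chi_add_two (k n : ℕ) :
    chi k 1 * chi k (n + 2) = chi k (n + 3) + (2 * k - 1) • chi k (n + 1) := by
  rw [chi_one_mul_chi_succ, chi_eq_sum_reducedWords k (n + 1), smul_sum]
  congr 1
  refine sum_congr rfl fun T hT => ?_
  obtain _ | ⟨d, T⟩ := T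
  · simp [mem_reducedWords] at hT
  · rw [card_extensions_cons, Fintype.card_fin]

theorem stmt12_general (k : ℕ) (n : ℕ) :
    chi k n = Polynomial.aeval (chi k 1) (p k n) := by
  induction n using Nat.strong_induction_on with
  | _ n ih =>
    match n with
    | 0 => rw [chi_zero, p, map_one]
    | 1 => rw [p, Polynomial.aeval_X]
    | 2 =>
      rw [p, map_sub, map_pow, Polynomial.aeval_X, Polynomial.aeval_C, map_natCast, sq,
        chi_one_mul_chi_one, nsmul_eq_mul, mul_one, add_sub_cancel_right]
    | m + 3 =>
      rw [p, map_sub, map_mul, map_mul, Polynomial.aeval_X, Polynomial.aeval_C,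
        map_natCast, ← ih (m + 2) (by omega), ← ih (m + 1) (by omega), chi_one_mul_chi_add_two,
        nsmul_eq_mul, add_sub_cancel_right]

/-- `χ_n = p_n(χ_1)` in the group ring `ℂ[F_k]`. -/
theorem stmt12 (k : ℕ) (hk : 2 ≤ k) (n : ℕ) :
    chi k n = Polynomial.aeval (chi k 1) (p k n) :=
  stmt12_general k n
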